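/- Let (Dᵢ,eᵢ) be digroups with disemigroup presentations Disgp⟨Xᵢ | Sᵢ⟩ where eᵢ ∈ Xᵢ (i = 1,2). Then Disgp⟨X₁ ∪ X₂ | S₁ ∪ S₂ ∪ {e₁ = e₂}⟩, with distinguished element the class of e₁, is the free product of (D₁,e₁) and (D₂,e₂) in the category of digroups. -/

import Mathlib

/-- A disemigroup: two associative operations `l` (⊢) and `r` (⊣)
satisfying the dialgebra axioms. -/
structure DisemigroupStruct (D : Type) where
  l : D → D → D
  r : D → D → D
  l_assoc : ∀ a b c, l (l a b) c = l a (l b c)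
  r_assoc : ∀ a b c, r (r a b) c = r a (r b c)
  ax1 : ∀ a b c, r a (l b c) = r a (r b c)
  ax2 : ∀ a b c, l (r a b) c = l (l a b) c
  ax3 : ∀ a b c, l a (r b c) = r (l a b) c

/-- A digroup: a disemigroup with a bar-unit `one` and inverses. -/
structure DigroupStruct (D : Type) extends DisemigroupStruct D where
  one : D
  inv : D → D
  one_l : ∀ a, l one a = a
  r_one : ∀ a, r a one = a
  l_inv : ∀ a, l a (inv a) = one
  inv_r : ∀ a, r (inv a) a = one

def IsDisemigroupHom {A B : Type} (G : DisemigroupStruct A) (H : DisemigroupStruct B)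
    (f : A → B) : Prop :=
  (∀ a b, f (G.l a b) = H.l (f a) (f b)) ∧ (∀ a b, f (G.r a b) = H.r (f a) (f b))

def IsDigroupHom {A B : Type} (G : DigroupStruct A) (H : DigroupStruct B)
    (f : A → B) : Prop :=
  (∀ a b, f (G.l a b) = H.l (f a) (f b)) ∧ (∀ a b, f (G.r a b) = H.r (f a) (f b)) ∧
  f G.one = H.one

/-- The group part J = {a ⊢ 1 : a ∈ G}. -/
def groupPart {A : Type} (G : DigroupStruct A) : Set A := {a | ∃ b, a = G.l b G.one}

/-- The halo: the set of bar-units. -/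
def halo {A : Type} (G : DigroupStruct A) : Set A := {e | ∀ a, G.l e a = a ∧ G.r a e = a}

/-- `(D, g1, g2)` is a free product (coproduct) of the digroups `D1`, `D2`. -/
def IsFreeProduct {A1 A2 B : Type} (D1 : DigroupStruct A1) (D2 : DigroupStruct A2)
    (D : DigroupStruct B) (g1 : A1 → B) (g2 : A2 → B) : Prop :=
  IsDigroupHom D1 D g1 ∧ IsDigroupHom D2 D g2 ∧
  ∀ {C : Type} (G : DigroupStruct C) (f1 : A1 → C) (f2 : A2 → C),
    IsDigroupHom D1 G f1 → IsDigroupHom D2 G f2 →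
    ∃! φ : B → C, IsDigroupHom D G φ ∧ φ ∘ g1 = f1 ∧ φ ∘ g2 = f2

/-- The free disemigroup `[X⁺]_ω` on `X`: pairs `[u]_m` with `u` a nonempty word
and `1 ≤ m ≤ |u|`. -/
def FreeDi (X : Type) : Type :=
  {p : List X × ℕ // p.1 ≠ [] ∧ 1 ≤ p.2 ∧ p.2 ≤ p.1.length}

/-- `[u]_m ⊢ [v]_n = [uv]_{|u|+n}`. -/
def FreeDi.opL {X : Type} (a b : FreeDi X) : FreeDi X :=
  ⟨(a.val.1 ++ b.val.1, a.val.1.length + b.val.2), by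
    obtain ⟨ha, ha1, ha2⟩ := a.property
    obtain ⟨hb, hb1, hb2⟩ := b.property
    refine ⟨?_, by omega, ?_⟩
    · simp [List.append_eq_nil_iff, ha]
    · simp only [List.length_append]; omega⟩

/-- `[u]_m ⊣ [v]_n = [uv]_m`. -/
def FreeDi.opR {X : Type} (a b : FreeDi X) : FreeDi X :=
  ⟨(a.val.1 ++ b.val.1, a.val.2), by
    obtain ⟨ha, ha1, ha2⟩ := a.property
    obtain ⟨hb, hb1, hb2⟩ := b.property
    refine ⟨?_, by omega, ?_⟩
    · simp [List.append_eq_nil_iff, ha]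
    · simp only [List.length_append]; omega⟩

/-- The generator `[x]₁`. -/
def FreeDi.single {X : Type} (x : X) : FreeDi X := ⟨([x], 1), by simp⟩

/-- The disemigroup congruence `ρ(S)` on the free disemigroup generated by a
set of relations `S`. -/
inductive DiCong {X : Type} (S : FreeDi X → FreeDi X → Prop) :
    FreeDi X → FreeDi X → Prop
  | of {a b} : S a b → DiCong S a b
  | refl (a) : DiCong S a a
  | symm {a b} : DiCong S a b → DiCong S b a
  | trans {a b c} : DiCong S a b → DiCong S b c → DiCong S a c
  | lcongr {a b c d} : DiCong S a b → DiCong S c d →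
      DiCong S (FreeDi.opL a c) (FreeDi.opL b d)
  | rcongr {a b c d} : DiCong S a b → DiCong S c d →
      DiCong S (FreeDi.opR a c) (FreeDi.opR b d)

/-- The presented disemigroup `Disgp⟨X | S⟩`. -/
def Disgp {X : Type} (S : FreeDi X → FreeDi X → Prop) : Type := Quot (DiCong S)

/-- Map induced on free disemigroups by a map of generating sets. -/
def FreeDi.map {X Y : Type} (f : X → Y) (a : FreeDi X) : FreeDi Y :=
  ⟨(a.val.1.map f, a.val.2), by
    obtain ⟨ha, ha1, ha2⟩ := a.property
    refine ⟨by simpa using ha, ha1, by simpa using ha2⟩⟩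

/-!
The relation `e₁ = e₂` makes the class `e` of `e₁` the image of both units. Hence every image of
an element of `D₁` or `D₂` is fixed by `e` on both sides and has an inverse in the group part
`{b ⊢ e}`; this property passes to `⊢`- and `⊣`-products, so it holds on the whole presented
disemigroup, which is therefore a digroup with bar-unit `e`. The universal property is that of
presentations: homomorphisms out of `Disgp⟨X | S⟩` are the maps of generators respecting `S`, and
two homomorphisms out of `D₁` and `D₂` that agree on the units define such a map on `X₁ ⊔ X₂`.
-/

namespace FreeDi

variable {X Y : Type}

lemma ext {a b : FreeDi X} (h : a.val = b.val) : a = b := Subtype.ext h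

def disemigroup (X : Type) : DisemigroupStruct (FreeDi X) where
  l := opL
  r := opR
  l_assoc a b c := ext (by simp [opL, List.append_assoc]; omega)
  r_assoc a b c := ext (by simp [opR, List.append_assoc])
  ax1 _ _ _ := rfl
  ax2 _ _ _ := rfl
  ax3 a b c := ext (by simp [opL, opR, List.append_assoc])

lemma map_isDisemigroupHom (f : X → Y) :
    IsDisemigroupHom (disemigroup X) (disemigroup Y) (map f) :=
  ⟨fun a b => ext (by simp [disemigroup, map, opL]),
    fun a b => ext (by simp [disemigroup, map, opR])⟩

theorem induction_on {P : FreeDi X → Prop} (a : FreeDi X) (single : ∀ x, P (single x))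
    (opL : ∀ a b, P a → P b → P (a.opL b)) (opR : ∀ a b, P a → P b → P (a.opR b)) : P a := by
  obtain ⟨⟨u, m⟩, hu, hm1, hm2⟩ := a
  obtain ⟨x, u, rfl⟩ := List.exists_cons_of_ne_nil hu
  induction u generalizing x m with
  | nil =>
    obtain rfl : m = 1 := by simp at hm2; omega
    exact single x
  | cons y v ih =>
    simp only [List.length_cons] at hm2
    rcases Nat.lt_or_ge 1 m with hm | hm
    · refine (congrArg P (ext ?_)).mpr
        (opL _ _ (single x) (ih (m - 1) y (by simp) (by omega) (by simp; omega)))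
      simp [FreeDi.opL, FreeDi.single]; omega
    · refine (congrArg P (ext ?_)).mpr (opR _ _ (single x) (ih 1 y (by simp) le_rfl (by simp)))
      simp [FreeDi.opR, FreeDi.single]; omega

section lift

variable {C : Type} (G : DisemigroupStruct C) (gen : X → C)

/-- `evalWord x u m` is `x ⊢ ⋯ ⊢ xₘ ⊣ ⋯ ⊣ xₙ` for the word `x :: u = x₁ ⋯ xₙ`, the value of
`[x :: u]ₘ`. -/
def evalWord : X → List X → ℕ → C
  | x, [], _ => gen x
  | x, y :: u, m =>
    if m ≤ 1 then G.r (gen x) (evalWord y u 1) else G.l (gen x) (evalWord y u (m - 1))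

lemma evalWord_cons_of_le (x y : X) (u : List X) {m : ℕ} (hm : m ≤ 1) :
    evalWord G gen x (y :: u) m = G.r (gen x) (evalWord G gen y u 1) := if_pos hm

lemma evalWord_cons_of_lt (x y : X) (u : List X) {m : ℕ} (hm : 1 < m) :
    evalWord G gen x (y :: u) m = G.l (gen x) (evalWord G gen y u (m - 1)) := if_neg (by omega)

lemma r_evalWord (z : C) (x : X) (u : List X) (m : ℕ) :
    G.r z (evalWord G gen x u m) = G.r z (evalWord G gen x u 1) := by
  induction u generalizing z x m with
  | nil => rfl
  | cons y u ih =>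
    rw [evalWord_cons_of_le G gen x y u le_rfl]
    rcases le_or_gt m 1 with hm | hm
    · rw [evalWord_cons_of_le G gen x y u hm]
    · rw [evalWord_cons_of_lt G gen x y u hm, G.ax1, ← G.r_assoc, ih, G.r_assoc]

lemma l_evalWord_append (x y : X) (u v : List X) (m : ℕ) {n : ℕ} (hn : 1 ≤ n) :
    G.l (evalWord G gen x u m) (evalWord G gen y v n) =
      evalWord G gen x (u ++ y :: v) (u.length + 1 + n) := by
  induction u generalizing x m with
  | nil => rw [List.nil_append, evalWord_cons_of_lt G gen x y v (by simp; omega)]; simp [evalWord]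
  | cons z u ih =>
    have hlen : (z :: u).length + 1 + n - 1 = u.length + 1 + n := by simp
    rw [List.cons_append, evalWord_cons_of_lt G gen x z (u ++ y :: v) (by simp; omega), hlen]
    rcases le_or_gt m 1 with hm | hm
    · rw [evalWord_cons_of_le G gen x z u hm, G.ax2, G.l_assoc, ih]
    · rw [evalWord_cons_of_lt G gen x z u hm, G.l_assoc, ih]

lemma r_evalWord_append (x y : X) (u v : List X) {m : ℕ} (hm : m ≤ u.length + 1) (n : ℕ) :
    G.r (evalWord G gen x u m) (evalWord G gen y v n) = evalWord G gen x (u ++ y :: v) m := by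
  induction u generalizing x m with
  | nil =>
    rw [List.nil_append, r_evalWord, evalWord_cons_of_le G gen x y v (by simpa using hm)]
    rfl
  | cons z u ih =>
    rw [List.cons_append]
    rcases le_or_gt m 1 with hm1 | hm1
    · rw [evalWord_cons_of_le G gen x z u hm1, evalWord_cons_of_le G gen x z _ hm1, G.r_assoc,
        ih z (by simp)]
    · rw [evalWord_cons_of_lt G gen x z u hm1, evalWord_cons_of_lt G gen x z _ hm1, ← G.ax3,
        ih z (by simp at hm; omega)]

def lift (a : FreeDi X) : C := evalWord G gen (a.val.1.head a.property.1) a.val.1.tail a.val.2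

lemma lift_isDisemigroupHom : IsDisemigroupHom (disemigroup X) G (lift G gen) := by
  refine ⟨?_, ?_⟩ <;> rintro ⟨⟨u, m⟩, hu, -, hm⟩ ⟨⟨v, n⟩, hv, hn, -⟩ <;>
    obtain ⟨x, u, rfl⟩ := List.exists_cons_of_ne_nil hu <;>
    obtain ⟨y, v, rfl⟩ := List.exists_cons_of_ne_nil hv
  · exact (l_evalWord_append G gen x y u v m hn).symm
  · exact (r_evalWord_append G gen x y u v hm n).symm

end lift

lemma hom_ext {C : Type} {G : DisemigroupStruct C} {f g : FreeDi X → C}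
    (hf : IsDisemigroupHom (disemigroup X) G f) (hg : IsDisemigroupHom (disemigroup X) G g)
    (h : ∀ x, f (single x) = g (single x)) : f = g := by
  funext a
  induction a using induction_on with
  | single x => exact h x
  | opL a b iha ihb => exact (hf.1 a b).trans ((congrArg₂ G.l iha ihb).trans (hg.1 a b).symm)
  | opR a b iha ihb => exact (hf.2 a b).trans ((congrArg₂ G.r iha ihb).trans (hg.2 a b).symm)

end FreeDi

section Hom

variable {A B C : Type} {G : DisemigroupStruct A} {H : DisemigroupStruct B}
  {K : DisemigroupStruct C}

lemma IsDisemigroupHom.comp {g : B → C} {f : A → B} (hg : IsDisemigroupHom H K g)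
    (hf : IsDisemigroupHom G H f) : IsDisemigroupHom G K (g ∘ f) :=
  ⟨fun a b => by simp only [Function.comp, hf.1, hg.1],
    fun a b => by simp only [Function.comp, hf.2, hg.2]⟩

lemma IsDisemigroupHom.symm {e : A ≃ B} (he : IsDisemigroupHom G H e) :
    IsDisemigroupHom H G e.symm :=
  ⟨fun a b => e.injective (by simp only [he.1, Equiv.apply_symm_apply]),
    fun a b => e.injective (by simp only [he.2, Equiv.apply_symm_apply])⟩

lemma IsDisemigroupHom.exists_comp_eq {φ : A → B} (hφbij : Function.Bijective φ)
    (hφ : IsDisemigroupHom G H φ) {ψ : A → C} (hψ : IsDisemigroupHom G K ψ) :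
    ∃ g : B → C, IsDisemigroupHom H K g ∧ g ∘ φ = ψ :=
  ⟨ψ ∘ (Equiv.ofBijective φ hφbij).symm,
    hψ.comp (IsDisemigroupHom.symm (e := .ofBijective φ hφbij) hφ),
    funext fun a => congrArg ψ (Equiv.ofBijective_symm_apply_apply φ hφbij a)⟩

lemma IsDigroupHom.toIsDisemigroupHom {G : DigroupStruct A} {H : DigroupStruct B} {f : A → B}
    (hf : IsDigroupHom G H f) : IsDisemigroupHom G.toDisemigroupStruct H.toDisemigroupStruct f :=
  ⟨hf.1, hf.2.1⟩

end Hom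

namespace Disgp

variable {X Y : Type} {S : FreeDi X → FreeDi X → Prop}

variable (S) in
def disemigroup : DisemigroupStruct (Disgp S) where
  l := Quot.map₂ FreeDi.opL (fun a _ _ h => (DiCong.refl a).lcongr h)
    (fun _ _ b h => h.lcongr (DiCong.refl b))
  r := Quot.map₂ FreeDi.opR (fun a _ _ h => (DiCong.refl a).rcongr h)
    (fun _ _ b h => h.rcongr (DiCong.refl b))
  l_assoc := by
    rintro ⟨a⟩ ⟨b⟩ ⟨c⟩; exact congrArg (Quot.mk _) ((FreeDi.disemigroup X).l_assoc a b c)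
  r_assoc := by
    rintro ⟨a⟩ ⟨b⟩ ⟨c⟩; exact congrArg (Quot.mk _) ((FreeDi.disemigroup X).r_assoc a b c)
  ax1 := by rintro ⟨a⟩ ⟨b⟩ ⟨c⟩; exact congrArg (Quot.mk _) ((FreeDi.disemigroup X).ax1 a b c)
  ax2 := by rintro ⟨a⟩ ⟨b⟩ ⟨c⟩; exact congrArg (Quot.mk _) ((FreeDi.disemigroup X).ax2 a b c)
  ax3 := by rintro ⟨a⟩ ⟨b⟩ ⟨c⟩; exact congrArg (Quot.mk _) ((FreeDi.disemigroup X).ax3 a b c)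

lemma mk_isDisemigroupHom :
    IsDisemigroupHom (FreeDi.disemigroup X) (disemigroup S) (Quot.mk _) :=
  ⟨fun _ _ => rfl, fun _ _ => rfl⟩

lemma isDisemigroupHom_of_mk {C : Type} {G : DisemigroupStruct C} {f : Disgp S → C}
    (hl : ∀ a b, f (Quot.mk _ (FreeDi.opL a b)) = G.l (f (Quot.mk _ a)) (f (Quot.mk _ b)))
    (hr : ∀ a b, f (Quot.mk _ (FreeDi.opR a b)) = G.r (f (Quot.mk _ a)) (f (Quot.mk _ b))) :
    IsDisemigroupHom (disemigroup S) G f :=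
  ⟨by rintro ⟨a⟩ ⟨b⟩; exact hl a b, by rintro ⟨a⟩ ⟨b⟩; exact hr a b⟩

theorem induction_on {P : Disgp S → Prop} (q : Disgp S)
    (single : ∀ x, P (Quot.mk _ (FreeDi.single x)))
    (l : ∀ p q, P p → P q → P ((disemigroup S).l p q))
    (r : ∀ p q, P p → P q → P ((disemigroup S).r p q)) : P q :=
  Quot.ind (fun a => FreeDi.induction_on a single (fun a b => l (Quot.mk _ a) (Quot.mk _ b))
    (fun a b => r (Quot.mk _ a) (Quot.mk _ b))) q

lemma hom_ext {C : Type} {G : DisemigroupStruct C} {f g : Disgp S → C}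
    (hf : IsDisemigroupHom (disemigroup S) G f) (hg : IsDisemigroupHom (disemigroup S) G g)
    (h : ∀ x, f (Quot.mk _ (FreeDi.single x)) = g (Quot.mk _ (FreeDi.single x))) : f = g := by
  funext q
  induction q using induction_on with
  | single x => exact h x
  | l p q hp hq => exact (hf.1 p q).trans ((congrArg₂ G.l hp hq).trans (hg.1 p q).symm)
  | r p q hp hq => exact (hf.2 p q).trans ((congrArg₂ G.r hp hq).trans (hg.2 p q).symm)

section lift

variable {C : Type} (G : DisemigroupStruct C) {f : FreeDi X → C}

lemma _root_.DiCong.apply_eq (hf : IsDisemigroupHom (FreeDi.disemigroup X) G f)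
    (hS : ∀ a b, S a b → f a = f b) {a b : FreeDi X} (h : DiCong S a b) : f a = f b := by
  induction h with
  | of h => exact hS _ _ h
  | refl => rfl
  | symm _ ih => exact ih.symm
  | trans _ _ ih₁ ih₂ => exact ih₁.trans ih₂
  | lcongr _ _ ih₁ ih₂ => exact (hf.1 _ _).trans ((congrArg₂ G.l ih₁ ih₂).trans (hf.1 _ _).symm)
  | rcongr _ _ ih₁ ih₂ => exact (hf.2 _ _).trans ((congrArg₂ G.r ih₁ ih₂).trans (hf.2 _ _).symm)

def lift (hf : IsDisemigroupHom (FreeDi.disemigroup X) G f) (hS : ∀ a b, S a b → f a = f b) :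
    Disgp S → C :=
  Quot.lift f fun _ _ => DiCong.apply_eq G hf hS

lemma lift_isDisemigroupHom (hf : IsDisemigroupHom (FreeDi.disemigroup X) G f)
    (hS : ∀ a b, S a b → f a = f b) : IsDisemigroupHom (disemigroup S) G (lift G hf hS) :=
  isDisemigroupHom_of_mk hf.1 hf.2

end lift

def map (f : X → Y) {T : FreeDi Y → FreeDi Y → Prop}
    (hf : ∀ a b, S a b → T (FreeDi.map f a) (FreeDi.map f b)) : Disgp S → Disgp T :=
  lift (disemigroup T) (mk_isDisemigroupHom.comp (FreeDi.map_isDisemigroupHom f))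
    fun a b h => Quot.sound (.of (hf a b h))

lemma map_isDisemigroupHom (f : X → Y) {T : FreeDi Y → FreeDi Y → Prop}
    (hf : ∀ a b, S a b → T (FreeDi.map f a) (FreeDi.map f b)) :
    IsDisemigroupHom (disemigroup S) (disemigroup T) (map f hf) :=
  lift_isDisemigroupHom _ _ _

end Disgp

section Amalgam

variable {X1 X2 : Type} {S1 : FreeDi X1 → FreeDi X1 → Prop} {S2 : FreeDi X2 → FreeDi X2 → Prop}
  {e1 : X1} {e2 : X2}

variable (S1 S2 e1 e2) in
/-- The relations `S₁ ∪ S₂ ∪ {e₁ = e₂}` on the generators `X₁ ⊕ X₂`. -/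
def amalgamRel (a b : FreeDi (X1 ⊕ X2)) : Prop :=
  (∃ a' b', S1 a' b' ∧ a = FreeDi.map Sum.inl a' ∧ b = FreeDi.map Sum.inl b') ∨
  (∃ a' b', S2 a' b' ∧ a = FreeDi.map Sum.inr a' ∧ b = FreeDi.map Sum.inr b') ∨
  (a = FreeDi.single (Sum.inl e1) ∧ b = FreeDi.single (Sum.inr e2))

lemma amalgamRel_inl (a b : FreeDi X1) (h : S1 a b) :
    amalgamRel S1 S2 e1 e2 (FreeDi.map Sum.inl a) (FreeDi.map Sum.inl b) :=
  Or.inl ⟨a, b, h, rfl, rfl⟩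

lemma amalgamRel_inr (a b : FreeDi X2) (h : S2 a b) :
    amalgamRel S1 S2 e1 e2 (FreeDi.map Sum.inr a) (FreeDi.map Sum.inr b) :=
  Or.inr (Or.inl ⟨a, b, h, rfl, rfl⟩)

lemma amalgamRel_single :
    amalgamRel S1 S2 e1 e2 (FreeDi.single (Sum.inl e1)) (FreeDi.single (Sum.inr e2)) :=
  Or.inr (Or.inr ⟨rfl, rfl⟩)

open Disgp in
theorem Disgp.existsUnique_amalgam_hom {C : Type} (G : DisemigroupStruct C)
    {h1 : Disgp S1 → C} {h2 : Disgp S2 → C} (hh1 : IsDisemigroupHom (disemigroup S1) G h1)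
    (hh2 : IsDisemigroupHom (disemigroup S2) G h2)
    (he : h1 (Quot.mk _ (FreeDi.single e1)) = h2 (Quot.mk _ (FreeDi.single e2))) :
    ∃! Φ : Disgp (amalgamRel S1 S2 e1 e2) → C, IsDisemigroupHom (disemigroup _) G Φ ∧
      Φ ∘ map Sum.inl amalgamRel_inl = h1 ∧ Φ ∘ map Sum.inr amalgamRel_inr = h2 := by
  set gen : X1 ⊕ X2 → C :=
    Sum.elim (fun x => h1 (Quot.mk _ (FreeDi.single x))) (fun x => h2 (Quot.mk _ (FreeDi.single x)))
  have hF := FreeDi.lift_isDisemigroupHom G gen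
  have hF1 : FreeDi.lift G gen ∘ FreeDi.map Sum.inl = h1 ∘ Quot.mk _ :=
    FreeDi.hom_ext (hF.comp (FreeDi.map_isDisemigroupHom _)) (hh1.comp mk_isDisemigroupHom)
      fun _ => rfl
  have hF2 : FreeDi.lift G gen ∘ FreeDi.map Sum.inr = h2 ∘ Quot.mk _ :=
    FreeDi.hom_ext (hF.comp (FreeDi.map_isDisemigroupHom _)) (hh2.comp mk_isDisemigroupHom)
      fun _ => rfl
  have hrel : ∀ a b, amalgamRel S1 S2 e1 e2 a b → FreeDi.lift G gen a = FreeDi.lift G gen b := by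
    rintro _ _ (⟨a, b, h, rfl, rfl⟩ | ⟨a, b, h, rfl, rfl⟩ | ⟨rfl, rfl⟩)
    · exact (congrFun hF1 a).trans ((congrArg h1 (Quot.sound (.of h))).trans (congrFun hF1 b).symm)
    · exact (congrFun hF2 a).trans ((congrArg h2 (Quot.sound (.of h))).trans (congrFun hF2 b).symm)
    · exact he
  refine ⟨lift G hF hrel, ⟨lift_isDisemigroupHom G hF hrel, ?_, ?_⟩, ?_⟩
  · funext q; induction q using Quot.ind; exact congrFun hF1 _
  · funext q; induction q using Quot.ind; exact congrFun hF2 _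
  · rintro Ψ ⟨hΨ, hΨ1, hΨ2⟩
    refine hom_ext hΨ (lift_isDisemigroupHom G hF hrel) ?_
    rintro (x | x)
    · exact congrFun hΨ1 (Quot.mk _ (FreeDi.single x))
    · exact congrFun hΨ2 (Quot.mk _ (FreeDi.single x))

end Amalgam

section BarInvertible

variable {C : Type} (G : DisemigroupStruct C) (e : C)

/-- The inverse `y` is required to lie in the group part `{b ⊢ e}`: this is what makes the
property stable under both products. -/
def IsBarInvertible (a : C) : Prop :=
  G.l e a = a ∧ G.r a e = a ∧ ∃ y, G.l a y = e ∧ G.r y a = e ∧ G.l y e = y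

variable {G e}

lemma IsBarInvertible.l_and_r {a b : C} (ha : IsBarInvertible G e a)
    (hb : IsBarInvertible G e b) :
    IsBarInvertible G e (G.l a b) ∧ IsBarInvertible G e (G.r a b) := by
  obtain ⟨ha1, -, y, hay, hya, hye⟩ := ha
  obtain ⟨-, hb2, z, hbz, hzb, hze⟩ := hb
  have hey : G.l e y = y := by rw [← hya, G.ax2, G.l_assoc, hay, hye]
  have hinv : G.l (G.l a b) (G.l z y) = e := by rw [G.l_assoc, ← G.l_assoc b, hbz, hey, hay]
  have hzya : G.r (G.l z y) a = z := by rw [← G.ax3, hya, hze]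
  have hzy : G.l (G.l z y) e = G.l z y := by rw [G.l_assoc, hye]
  refine ⟨⟨by rw [← G.l_assoc, ha1], by rw [← G.ax3, hb2], G.l z y, hinv, ?_, hzy⟩,
    ⟨by rw [G.ax3, ha1], by rw [G.r_assoc, hb2], G.l z y, by rw [G.ax2, hinv], ?_, hzy⟩⟩
  · rw [G.ax1, ← G.r_assoc, hzya, hzb]
  · rw [← G.r_assoc, hzya, hzb]

variable (G e) in
noncomputable def DigroupStruct.ofBarInvertible (h : ∀ a, IsBarInvertible G e a) :
    DigroupStruct C where
  toDisemigroupStruct := G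
  one := e
  inv a := (h a).2.2.choose
  one_l a := (h a).1
  r_one a := (h a).2.1
  l_inv a := (h a).2.2.choose_spec.1
  inv_r a := (h a).2.2.choose_spec.2.1

lemma DigroupStruct.l_inv_one {D : Type} (H : DigroupStruct D) (a : D) :
    H.l (H.inv a) H.one = H.inv a := by
  conv_lhs => rw [← H.l_inv a, ← H.l_assoc, ← H.ax2, H.inv_r, H.one_l]

lemma isBarInvertible_apply {D : Type} (H : DigroupStruct D) {f : D → C}
    (hf : IsDisemigroupHom H.toDisemigroupStruct G f) (he : f H.one = e) (d : D) :
    IsBarInvertible G e (f d) :=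
  ⟨by rw [← he, ← hf.1, H.one_l], by rw [← he, ← hf.2, H.r_one], f (H.inv d),
    by rw [← hf.1, H.l_inv, he], by rw [← hf.2, H.inv_r, he],
    by rw [← he, ← hf.1, H.l_inv_one]⟩

lemma Disgp.isBarInvertible_of_single {X : Type} {S : FreeDi X → FreeDi X → Prop} {e : Disgp S}
    (h : ∀ x, IsBarInvertible (disemigroup S) e (Quot.mk _ (FreeDi.single x))) (q : Disgp S) :
    IsBarInvertible (disemigroup S) e q :=
  induction_on q h (fun _ _ hp hq => (hp.l_and_r hq).1) fun _ _ hp hq => (hp.l_and_r hq).2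

end BarInvertible

theorem isFreeProduct_of_existsUnique {A1 A2 B : Type} {D1 : DigroupStruct A1}
    {D2 : DigroupStruct A2} {D : DigroupStruct B} {g1 : A1 → B} {g2 : A2 → B}
    (hg1 : IsDigroupHom D1 D g1) (hg2 : IsDigroupHom D2 D g2)
    (h : ∀ {C : Type} (G : DisemigroupStruct C) (f1 : A1 → C) (f2 : A2 → C),
      IsDisemigroupHom D1.toDisemigroupStruct G f1 → IsDisemigroupHom D2.toDisemigroupStruct G f2 →
      f1 D1.one = f2 D2.one →
      ∃! Φ : B → C, IsDisemigroupHom D.toDisemigroupStruct G Φ ∧ Φ ∘ g1 = f1 ∧ Φ ∘ g2 = f2) :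
    IsFreeProduct D1 D2 D g1 g2 := by
  refine ⟨hg1, hg2, fun G f1 f2 hf1 hf2 => ?_⟩
  obtain ⟨Φ, ⟨hΦ, hΦ1, hΦ2⟩, huniq⟩ := h G.toDisemigroupStruct f1 f2 hf1.toIsDisemigroupHom
    hf2.toIsDisemigroupHom (hf1.2.2.trans hf2.2.2.symm)
  have hΦe : Φ D.one = G.one := by rw [← hg1.2.2, ← hf1.2.2, ← hΦ1]; rfl
  exact ⟨Φ, ⟨⟨hΦ.1, hΦ.2, hΦe⟩, hΦ1, hΦ2⟩,
    fun Ψ ⟨hΨ, hΨ1, hΨ2⟩ => huniq Ψ ⟨hΨ.toIsDisemigroupHom, hΨ1, hΨ2⟩⟩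

/-- Given digroups `(Dᵢ, eᵢ)` with disemigroup presentations `Disgp⟨Xᵢ | Sᵢ⟩`
(with `eᵢ ∈ Xᵢ`), the presentation `Disgp⟨X₁ ⊔ X₂ | S₁ ∪ S₂ ∪ {e₁ = e₂}⟩`, with
distinguished element the class of `e₁`, is the free product of the digroups. -/
theorem freeProduct_of_presentations {X1 X2 D1 D2 : Type}
    (S1 : FreeDi X1 → FreeDi X1 → Prop) (S2 : FreeDi X2 → FreeDi X2 → Prop)
    (D1st : DigroupStruct D1) (D2st : DigroupStruct D2)
    (e1 : X1) (e2 : X2)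
    (φ1 : Disgp S1 → D1) (hφ1bij : Function.Bijective φ1)
    (hφ1l : ∀ a b : FreeDi X1,
      φ1 (Quot.mk _ (FreeDi.opL a b)) = D1st.l (φ1 (Quot.mk _ a)) (φ1 (Quot.mk _ b)))
    (hφ1r : ∀ a b : FreeDi X1,
      φ1 (Quot.mk _ (FreeDi.opR a b)) = D1st.r (φ1 (Quot.mk _ a)) (φ1 (Quot.mk _ b)))
    (hφ1e : φ1 (Quot.mk _ (FreeDi.single e1)) = D1st.one)
    (φ2 : Disgp S2 → D2) (hφ2bij : Function.Bijective φ2)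
    (hφ2l : ∀ a b : FreeDi X2,
      φ2 (Quot.mk _ (FreeDi.opL a b)) = D2st.l (φ2 (Quot.mk _ a)) (φ2 (Quot.mk _ b)))
    (hφ2r : ∀ a b : FreeDi X2,
      φ2 (Quot.mk _ (FreeDi.opR a b)) = D2st.r (φ2 (Quot.mk _ a)) (φ2 (Quot.mk _ b)))
    (hφ2e : φ2 (Quot.mk _ (FreeDi.single e2)) = D2st.one) :
    ∀ S : FreeDi (X1 ⊕ X2) → FreeDi (X1 ⊕ X2) → Prop,
    (∀ a b, S a b ↔
      (∃ a' b', S1 a' b' ∧ a = FreeDi.map Sum.inl a' ∧ b = FreeDi.map Sum.inl b') ∨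
      (∃ a' b', S2 a' b' ∧ a = FreeDi.map Sum.inr a' ∧ b = FreeDi.map Sum.inr b') ∨
      (a = FreeDi.single (Sum.inl e1) ∧ b = FreeDi.single (Sum.inr e2))) →
    ∃ (Q : DigroupStruct (Disgp S)) (g1 : D1 → Disgp S) (g2 : D2 → Disgp S),
      (∀ a b : FreeDi (X1 ⊕ X2),
        Q.l (Quot.mk _ a) (Quot.mk _ b) = Quot.mk _ (FreeDi.opL a b)) ∧
      (∀ a b : FreeDi (X1 ⊕ X2),
        Q.r (Quot.mk _ a) (Quot.mk _ b) = Quot.mk _ (FreeDi.opR a b)) ∧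
      Q.one = Quot.mk _ (FreeDi.single (Sum.inl e1)) ∧
      (∀ w : FreeDi X1, g1 (φ1 (Quot.mk _ w)) = Quot.mk _ (FreeDi.map Sum.inl w)) ∧
      (∀ w : FreeDi X2, g2 (φ2 (Quot.mk _ w)) = Quot.mk _ (FreeDi.map Sum.inr w)) ∧
      IsFreeProduct D1st D2st Q g1 g2 := by
  intro S hS
  obtain rfl : S = amalgamRel S1 S2 e1 e2 := funext₂ fun a b => propext (hS a b)
  have hφ1 := Disgp.isDisemigroupHom_of_mk (G := D1st.toDisemigroupStruct) hφ1l hφ1r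
  have hφ2 := Disgp.isDisemigroupHom_of_mk (G := D2st.toDisemigroupStruct) hφ2l hφ2r
  obtain ⟨g1, hg1, hg1φ⟩ :=
    hφ1.exists_comp_eq hφ1bij (Disgp.map_isDisemigroupHom Sum.inl amalgamRel_inl)
  obtain ⟨g2, hg2, hg2φ⟩ :=
    hφ2.exists_comp_eq hφ2bij (Disgp.map_isDisemigroupHom Sum.inr amalgamRel_inr)
  set e : Disgp (amalgamRel S1 S2 e1 e2) := Quot.mk _ (FreeDi.single (Sum.inl e1))
  have hg1e : g1 D1st.one = e := by rw [← hφ1e]; exact congrFun hg1φ _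
  have hg2e : g2 D2st.one = e := by
    rw [← hφ2e]; exact (congrFun hg2φ _).trans (Quot.sound (.symm (.of amalgamRel_single)))
  have hinv := Disgp.isBarInvertible_of_single (e := e) <| by
    rintro (x | x)
    · exact (congrFun hg1φ (Quot.mk _ (FreeDi.single x))).subst (motive := IsBarInvertible _ e)
        (isBarInvertible_apply D1st hg1 hg1e _)
    · exact (congrFun hg2φ (Quot.mk _ (FreeDi.single x))).subst (motive := IsBarInvertible _ e)
        (isBarInvertible_apply D2st hg2 hg2e _)
  refine ⟨.ofBarInvertible _ e hinv, g1, g2, fun _ _ => rfl, fun _ _ => rfl, rfl,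
    fun _ => congrFun hg1φ _, fun _ => congrFun hg2φ _,
    isFreeProduct_of_existsUnique ⟨hg1.1, hg1.2, hg1e⟩ ⟨hg2.1, hg2.2, hg2e⟩ ?_⟩
  intro C G f1 f2 hf1 hf2 hf
  have h := Disgp.existsUnique_amalgam_hom G (hf1.comp hφ1) (hf2.comp hφ2)
    (show f1 (φ1 _) = f2 (φ2 _) by rw [hφ1e, hφ2e, hf])
  rw [← hg1φ, ← hg2φ] at h
  simp only [← Function.comp_assoc, hφ1bij.2.injective_comp_right.eq_iff,
    hφ2bij.2.injective_comp_right.eq_iff] at h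
  exact h
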